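/- arXiv:1210.3400 — 9 statements merged into one kernel-verified Lean document; each statement's English description precedes it below -/
import Mathlib

section
/- The classical Gauss-Lucas theorem: if f is a non-constant polynomial over the complex numbers, then every root of its derivative f' lies in the convex hull of the set of roots of f. -/
open Polynomial

theorem gauss_lucas_polynomial (f : Polynomial ℂ) (hf : 1 ≤ f.degree)
    (z : ℂ) (hz : (Polynomial.derivative f).eval z = 0) :
    z ∈ convexHull ℝ {w : ℂ | f.eval w = 0} := by
  have hdeg : 0 < f.degree := zero_lt_one.trans_le hf
  have hf₀ : f ≠ 0 := ne_zero_of_degree_gt hdeg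
  have hf'₀ : derivative f ≠ 0 :=
    derivative_ne_zero.2 (natDegree_pos_iff_degree_pos.2 hdeg).ne'
  have hroots : f.rootSet ℂ = {w | f.eval w = 0} := by
    ext w
    simp [mem_rootSet, hf₀]
  rw [← hroots]
  exact rootSet_derivative_subset_convexHull_rootSet hdeg
    (by simp [mem_rootSet, hf'₀, hz])
end

section
/- If f is a nonconstant entire function that is the locally uniform limit of a sequence of polynomials f_N, each of whose roots lie in a fixed closed convex set K ⊆ ℂ, then every zero of the derivative f' lies in K. -/
/-!
By the Gauss–Lucas theorem every zero of `(F N)'` lies in the convex hull of the zeros of `F N`,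
hence in `K`, once `F N` is nonconstant — which holds for large `N` since `f` is nonconstant.
The derivatives `(F N)'` converge locally uniformly to `f'`, and `f'` is not identically zero,
so by Hurwitz's theorem a zero `z` of `f'` is a limit of zeros of the `(F N)'`; as `K` is
closed, `z ∈ K`.
-/

open Filter Polynomial Metric Set Topology

namespace Polynomial

theorem degree_pos_of_eval_ne {R : Type*} [Semiring R] {p : R[X]} {a b : R}
    (h : p.eval a ≠ p.eval b) : 0 < p.degree := by
  contrapose! h
  rw [eq_C_of_degree_le_zero h, eval_C, eval_C]

theorem mem_of_eval_derivative_eq_zero {p : ℂ[X]} {K : Set ℂ} (hp : 0 < p.degree)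
    (hK : Convex ℝ K) (hroots : ∀ x, p.eval x = 0 → x ∈ K) {w : ℂ}
    (hw : p.derivative.eval w = 0) : w ∈ K := by
  have hp' : p.derivative ≠ 0 := derivative_ne_zero.2 (natDegree_pos_iff_degree_pos.2 hp).ne'
  have hw' : w ∈ p.derivative.rootSet ℂ := by
    rw [mem_rootSet, coe_aeval_eq_eval]
    exact ⟨hp', hw⟩
  refine convexHull_min (fun x hx => ?_) hK (rootSet_derivative_subset_convexHull_rootSet hp hw')
  rw [mem_rootSet, coe_aeval_eq_eval] at hx
  exact hroots x hx.2

end Polynomial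

namespace Complex

theorem le_norm_of_forall_mem_frontier_le_norm {E : Type*} [NormedAddCommGroup E]
    [NormedSpace ℂ E] [Nontrivial E] {f : E → ℂ} {U : Set E} (hU : Bornology.IsBounded U)
    (hd : DiffContOnCl ℂ f U)
    (hf : ∀ x ∈ closure U, f x ≠ 0) {c : ℝ} (hc : ∀ x ∈ frontier U, c ≤ ‖f x‖) {z : E}
    (hz : z ∈ closure U) : c ≤ ‖f z‖ := by
  rcases le_or_gt c 0 with hc0 | hc0
  · exact hc0.trans (norm_nonneg _)
  have hinv : ‖(f z)⁻¹‖ ≤ c⁻¹ := by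
    refine norm_le_of_forall_mem_frontier_norm_le hU (hd.inv hf) (fun x hx => ?_) hz
    rw [Pi.inv_apply, norm_inv]
    exact inv_anti₀ hc0 (hc x hx)
  rw [norm_inv] at hinv
  exact (inv_le_inv₀ (norm_pos_iff.2 (hf z hz)) hc0).1 hinv

variable {ι : Type*} {l : Filter ι} {F : ι → ℂ → ℂ} {g : ℂ → ℂ}

/-- If `m = min ‖g‖` on the sphere and `‖F n - g‖ < m / 2` on the ball, then `‖F n‖ ≥ m / 2`
on the sphere, hence at the centre by the minimum modulus principle, which forces `g z ≠ 0`. -/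
theorem ne_zero_of_tendstoUniformlyOn_closedBall {z : ℂ} {r : ℝ} (hr : 0 < r)
    (hconv : TendstoUniformlyOn F g l (closedBall z r))
    (hF : ∀ᶠ n in l, DifferentiableOn ℂ (F n) (closedBall z r))
    (hF0 : ∃ᶠ n in l, ∀ w ∈ closedBall z r, F n w ≠ 0)
    (hg : ∀ w ∈ sphere z r, g w ≠ 0) : g z ≠ 0 := by
  have hgc : ContinuousOn g (sphere z r) :=
    (hconv.continuousOn ((hF.and_frequently hF0).mono fun _ h => h.1.continuousOn)).mono
      sphere_subset_closedBall
  obtain ⟨w₀, hw₀, hmin⟩ :=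
    (isCompact_sphere z r).exists_isMinOn (NormedSpace.sphere_nonempty.2 hr.le) hgc.norm
  have hm : 0 < ‖g w₀‖ := norm_pos_iff.2 (hg w₀ hw₀)
  obtain ⟨n, ⟨hFn, hclose⟩, hFn0⟩ :=
    ((hF.and (tendstoUniformlyOn_iff.1 hconv _ (half_pos hm))).and_frequently hF0).exists
  have hsphere : ∀ w ∈ sphere z r, ‖g w₀‖ / 2 ≤ ‖F n w‖ := fun w hw => by
    have hw' := hclose w (sphere_subset_closedBall hw)
    rw [dist_eq_norm] at hw'
    linarith [norm_sub_norm_le (g w) (F n w), show ‖g w₀‖ ≤ ‖g w‖ from hmin hw]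
  have hcenter : ‖g w₀‖ / 2 ≤ ‖F n z‖ := by
    rw [← closure_ball z hr.ne'] at hFn0
    refine le_norm_of_forall_mem_frontier_le_norm isBounded_ball
      (hFn.diffContOnCl_ball subset_rfl) hFn0 (fun w hw => hsphere w ?_) ?_
    · rwa [frontier_ball z hr.ne'] at hw
    · exact subset_closure (mem_ball_self hr)
  intro hgz
  have hz := hclose z (mem_closedBall_self hr.le)
  rw [hgz, dist_zero_left] at hz
  linarith

/-- Hurwitz's theorem. -/
theorem eventually_exists_zero_of_tendstoLocallyUniformlyOn {U : Set ℂ} (hU : IsOpen U)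
    (hconv : TendstoLocallyUniformlyOn F g l U) (hF : ∀ᶠ n in l, DifferentiableOn ℂ (F n) U)
    {z : ℂ} (hz : z ∈ U) (hgz : g z = 0) (hg : ∀ᶠ w in 𝓝[≠] z, g w ≠ 0) {V : Set ℂ}
    (hV : V ∈ 𝓝 z) : ∀ᶠ n in l, ∃ w ∈ V, F n w = 0 := by
  have hS : ∀ᶠ w in 𝓝 z, w ∈ U ∩ V ∧ (w ≠ z → g w ≠ 0) :=
    Eventually.and (inter_mem (hU.mem_nhds hz) hV) (eventually_nhdsWithin_iff.1 hg)
  obtain ⟨r, hr, hrS⟩ := nhds_basis_closedBall.mem_iff.1 hS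
  have hrU : closedBall z r ⊆ U := fun w hw => (hrS hw).1.1
  by_contra h
  refine ne_zero_of_tendstoUniformlyOn_closedBall hr
    ((tendstoLocallyUniformlyOn_iff_forall_isCompact hU).1 hconv _ hrU (isCompact_closedBall z r))
    (hF.mono fun n hn => hn.mono hrU) ?_
    (fun w hw => (hrS (sphere_subset_closedBall hw)).2 (ne_of_mem_sphere hw hr.ne')) hgz
  exact (not_eventually.1 h).mono fun n hn w hw hw0 => hn ⟨w, (hrS hw).1.2, hw0⟩

theorem eventually_deriv_ne_zero {f : ℂ → ℂ} (hf : Differentiable ℂ f) {a b : ℂ}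
    (hab : f a ≠ f b) (z : ℂ) : ∀ᶠ w in 𝓝[≠] z, deriv f w ≠ 0 := by
  have hd : AnalyticOnNhd ℂ (deriv f) univ := (analyticOnNhd_univ_iff_differentiable.2 hf).deriv
  refine (hd z (mem_univ z)).eventually_eq_zero_or_eventually_ne_zero.resolve_left fun h => hab ?_
  have h0 := hd.eqOn_zero_of_preconnected_of_eventuallyEq_zero isPreconnected_univ (mem_univ z) h
  exact is_const_of_deriv_eq_zero hf (fun w => h0 (mem_univ w)) a b

end Complex

theorem gauss_lucas_limit_of_polynomials (f : ℂ → ℂ) (hf : Differentiable ℂ f)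
    (hnc : ¬ ∃ c : ℂ, f = fun _ => c)
    (F : ℕ → Polynomial ℂ)
    (hconv : TendstoLocallyUniformly (fun N z => (F N).eval z) f atTop)
    (K : Set ℂ) (hK : IsClosed K) (hKc : Convex ℝ K)
    (hroots : ∀ N : ℕ, ∀ z : ℂ, (F N).eval z = 0 → z ∈ K)
    (z : ℂ) (hz : deriv f z = 0) : z ∈ K := by
  obtain ⟨a, b, hab⟩ : ∃ a b, f a ≠ f b := by
    by_contra! h
    exact hnc ⟨f 0, funext fun x => h x 0⟩
  rw [← tendstoLocallyUniformlyOn_univ] at hconv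
  have hdeg : ∀ᶠ N in atTop, 0 < (F N).degree :=
    (((hconv.tendsto_at (mem_univ a)).sub (hconv.tendsto_at (mem_univ b))).eventually_ne
      (sub_ne_zero.2 hab)).mono fun N hN => degree_pos_of_eval_ne (sub_ne_zero.1 hN)
  have hderiv : TendstoLocallyUniformlyOn (fun N w => (F N).derivative.eval w) (deriv f)
      atTop univ := by
    convert hconv.deriv (.of_forall fun N => (F N).differentiable.differentiableOn) isOpen_univ
      using 1
    exact funext fun N => funext fun w => (Polynomial.deriv (F N)).symm
  by_contra hzK
  obtain ⟨N, ⟨w, hwK, hw⟩, hN⟩ :=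
    ((Complex.eventually_exists_zero_of_tendstoLocallyUniformlyOn isOpen_univ hderiv
      (.of_forall fun N => (F N).derivative.differentiable.differentiableOn) (mem_univ z) hz
      (Complex.eventually_deriv_ne_zero hf hab z) (hK.isOpen_compl.mem_nhds hzK)).and hdeg).exists
  exact hwK (mem_of_eval_derivative_eq_zero hN hKc (hroots N) hw)
end

section
/- Riemann rearrangement theorem: if a series of real numbers converges conditionally (converges but does not converge absolutely), then for every real number s there exists a permutation of the terms whose series converges to s. In particular there is a rearrangement summing to 0. -/
open Filter Finset

namespace RiemannRearr

variable (a : ℕ → ℝ) (s : ℝ) (p m : ℕ → ℕ)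

noncomputable def rstep : ℕ × ℕ × ℝ → ℕ × ℕ × ℝ :=
  fun x => if x.2.2 ≤ s then (x.1 + 1, x.2.1, x.2.2 + a (p x.1))
           else (x.1, x.2.1 + 1, x.2.2 + a (m x.2.1))

noncomputable def rst (k : ℕ) : ℕ × ℕ × ℝ := (rstep a s p m)^[k] (0, 0, 0)

noncomputable def ri (k : ℕ) : ℕ := (rst a s p m k).1
noncomputable def rj (k : ℕ) : ℕ := (rst a s p m k).2.1
noncomputable def rt (k : ℕ) : ℝ := (rst a s p m k).2.2
noncomputable def rb (k : ℕ) : ℕ :=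
  if rt a s p m k ≤ s then p (ri a s p m k) else m (rj a s p m k)

lemma rst_succ (k : ℕ) : rst a s p m (k + 1) = rstep a s p m (rst a s p m k) :=
  Function.iterate_succ_apply' _ _ _

lemma ri_zero : ri a s p m 0 = 0 := rfl
lemma rj_zero : rj a s p m 0 = 0 := rfl
lemma rt_zero : rt a s p m 0 = 0 := rfl

lemma step_pos {k : ℕ} (h : rt a s p m k ≤ s) :
    ri a s p m (k+1) = ri a s p m k + 1 ∧ rj a s p m (k+1) = rj a s p m k ∧
      rt a s p m (k+1) = rt a s p m k + a (p (ri a s p m k)) := by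
  have h' : (rst a s p m k).2.2 ≤ s := h
  simp only [ri, rj, rt, rst_succ, rstep, if_pos h']
  exact ⟨trivial, trivial, trivial⟩

lemma step_neg {k : ℕ} (h : ¬ rt a s p m k ≤ s) :
    ri a s p m (k+1) = ri a s p m k ∧ rj a s p m (k+1) = rj a s p m k + 1 ∧
      rt a s p m (k+1) = rt a s p m k + a (m (rj a s p m k)) := by
  have h' : ¬ (rst a s p m k).2.2 ≤ s := h
  simp only [ri, rj, rt, rst_succ, rstep, if_neg h']
  exact ⟨trivial, trivial, trivial⟩

lemma rt_succ (k : ℕ) : rt a s p m (k+1) = rt a s p m k + a (rb a s p m k) := by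
  by_cases h : rt a s p m k ≤ s
  · rw [rb, if_pos h]; exact (step_pos a s p m h).2.2
  · rw [rb, if_neg h]; exact (step_neg a s p m h).2.2

lemma sum_rb (N : ℕ) : ∑ n ∈ range N, a (rb a s p m n) = rt a s p m N := by
  induction N with
  | zero => simp [rt_zero]
  | succ n ih => rw [sum_range_succ, ih, rt_succ]

lemma ri_mono : Monotone (ri a s p m) := by
  apply monotone_nat_of_le_succ
  intro k
  by_cases h : rt a s p m k ≤ s
  · rw [(step_pos a s p m h).1]; omega
  · rw [(step_neg a s p m h).1]

lemma rj_mono : Monotone (rj a s p m) := by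
  apply monotone_nat_of_le_succ
  intro k
  by_cases h : rt a s p m k ≤ s
  · rw [(step_pos a s p m h).2.1]
  · rw [(step_neg a s p m h).2.1]; omega

lemma ri_succ_le (k : ℕ) : ri a s p m (k+1) ≤ ri a s p m k + 1 := by
  by_cases h : rt a s p m k ≤ s
  · rw [(step_pos a s p m h).1]
  · rw [(step_neg a s p m h).1]; omega

lemma rj_succ_le (k : ℕ) : rj a s p m (k+1) ≤ rj a s p m k + 1 := by
  by_cases h : rt a s p m k ≤ s
  · rw [(step_pos a s p m h).2.1]; omega
  · rw [(step_neg a s p m h).2.1]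

lemma exists_rt_le (hmS : Tendsto (fun N => ∑ i ∈ range N, -a (m i)) atTop atTop)
    (K : ℕ) : ∃ k, K ≤ k ∧ rt a s p m k ≤ s := by
  by_contra hcon
  push_neg at hcon
  have key : ∀ r, rj a s p m (K + r) = rj a s p m K + r ∧
      rt a s p m (K + r) = rt a s p m K + ∑ u ∈ range r, a (m (rj a s p m K + u)) := by
    intro r
    induction r with
    | zero => simp
    | succ r ih =>
      have hk : s < rt a s p m (K + r) := hcon _ (Nat.le_add_right _ _)
      have hstep := step_neg a s p m (not_le.mpr hk)
      constructor
      · rw [show K + (r+1) = (K + r) + 1 by ring, hstep.2.1, ih.1]; ring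
      · rw [show K + (r+1) = (K + r) + 1 by ring, hstep.2.2, ih.2, ih.1,
          sum_range_succ]
        ring
  set J := rj a s p m K with hJ
  obtain ⟨N, hN⟩ := eventually_atTop.mp (Filter.tendsto_atTop.mp hmS
    ((∑ i ∈ range J, -a (m i)) + (rt a s p m K - s) + 1))
  have hsum : ∑ i ∈ range (J + N), -a (m i)
      = ∑ i ∈ range J, -a (m i) + ∑ u ∈ range N, -a (m (J + u)) :=
    Finset.sum_range_add _ _ _
  have h1 := hN (J + N) (Nat.le_add_left _ _)
  have h2 := (key N).2
  have h3 : ∑ u ∈ range N, a (m (J + u)) = - ∑ u ∈ range N, -a (m (J + u)) := by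
    simp
  have h4 := hcon (K + N) (Nat.le_add_right _ _)
  rw [h2, h3] at h4
  rw [hsum] at h1
  linarith

lemma exists_lt_rt (hpS : Tendsto (fun N => ∑ i ∈ range N, a (p i)) atTop atTop)
    (K : ℕ) : ∃ k, K ≤ k ∧ s < rt a s p m k := by
  by_contra hcon
  push_neg at hcon
  have key : ∀ r, ri a s p m (K + r) = ri a s p m K + r ∧
      rt a s p m (K + r) = rt a s p m K + ∑ u ∈ range r, a (p (ri a s p m K + u)) := by
    intro r
    induction r with
    | zero => simp
    | succ r ih =>
      have hk : rt a s p m (K + r) ≤ s := hcon _ (Nat.le_add_right _ _)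
      have hstep := step_pos a s p m hk
      constructor
      · rw [show K + (r+1) = (K + r) + 1 by ring, hstep.1, ih.1]; ring
      · rw [show K + (r+1) = (K + r) + 1 by ring, hstep.2.2, ih.2, ih.1,
          sum_range_succ]
        ring
  set J := ri a s p m K with hJ
  obtain ⟨N, hN⟩ := eventually_atTop.mp (Filter.tendsto_atTop.mp hpS
    ((∑ i ∈ range J, a (p i)) + (s - rt a s p m K) + 1))
  have hsum : ∑ i ∈ range (J + N), a (p i)
      = ∑ i ∈ range J, a (p i) + ∑ u ∈ range N, a (p (J + u)) :=
    Finset.sum_range_add _ _ _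
  have h1 := hN (J + N) (Nat.le_add_left _ _)
  have h2 := (key N).2
  have h4 := hcon (K + N) (Nat.le_add_right _ _)
  rw [h2] at h4
  rw [hsum] at h1
  linarith

lemma tendsto_ri (hmS : Tendsto (fun N => ∑ i ∈ range N, -a (m i)) atTop atTop) :
    Tendsto (ri a s p m) atTop atTop := by
  apply tendsto_atTop_atTop_of_monotone (ri_mono a s p m)
  intro b
  induction b with
  | zero => exact ⟨0, Nat.zero_le _⟩
  | succ b ih =>
    obtain ⟨k, hk⟩ := ih
    obtain ⟨k', hk', hle⟩ := exists_rt_le a s p m hmS k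
    refine ⟨k' + 1, ?_⟩
    rw [(step_pos a s p m hle).1]
    have := ri_mono a s p m hk'
    omega

lemma tendsto_rj (hpS : Tendsto (fun N => ∑ i ∈ range N, a (p i)) atTop atTop) :
    Tendsto (rj a s p m) atTop atTop := by
  apply tendsto_atTop_atTop_of_monotone (rj_mono a s p m)
  intro b
  induction b with
  | zero => exact ⟨0, Nat.zero_le _⟩
  | succ b ih =>
    obtain ⟨k, hk⟩ := ih
    obtain ⟨k', hk', hle⟩ := exists_lt_rt a s p m hpS k
    refine ⟨k' + 1, ?_⟩
    rw [(step_neg a s p m (not_le.mpr hle)).2.1]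
    have := rj_mono a s p m hk'
    omega

lemma rb_lt_ne (hp0 : ∀ i, 0 ≤ a (p i)) (hm0 : ∀ j, a (m j) < 0)
    (hpm : StrictMono p) (hmm : StrictMono m) {k k' : ℕ} (hkk : k < k') :
    rb a s p m k ≠ rb a s p m k' := by
  intro heq
  by_cases h1 : rt a s p m k ≤ s <;> by_cases h2 : rt a s p m k' ≤ s <;>
    rw [rb, rb] at heq
  · rw [if_pos h1, if_pos h2] at heq
    have hlt : ri a s p m k < ri a s p m k' := by
      have h3 := (step_pos a s p m h1).1
      have h4 := ri_mono a s p m (show k + 1 ≤ k' from hkk)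
      omega
    exact absurd (hpm.injective heq) hlt.ne
  · rw [if_pos h1, if_neg h2] at heq
    have := hp0 (ri a s p m k)
    rw [heq] at this
    exact absurd this (not_le.mpr (hm0 _))
  · rw [if_neg h1, if_pos h2] at heq
    have := hp0 (ri a s p m k')
    rw [← heq] at this
    exact absurd this (not_le.mpr (hm0 _))
  · rw [if_neg h1, if_neg h2] at heq
    have hlt : rj a s p m k < rj a s p m k' := by
      have h3 := (step_neg a s p m h1).2.1
      have h4 := rj_mono a s p m (show k + 1 ≤ k' from hkk)
      omega
    exact absurd (hmm.injective heq) hlt.ne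

lemma rb_inj (hp0 : ∀ i, 0 ≤ a (p i)) (hm0 : ∀ j, a (m j) < 0)
    (hpm : StrictMono p) (hmm : StrictMono m) :
    Function.Injective (rb a s p m) := by
  intro k k' h
  rcases lt_trichotomy k k' with hlt | heq | hlt
  · exact absurd h (rb_lt_ne a s p m hp0 hm0 hpm hmm hlt)
  · exact heq
  · exact absurd h.symm (rb_lt_ne a s p m hp0 hm0 hpm hmm hlt)

lemma rb_surj (hpS : Tendsto (fun N => ∑ i ∈ range N, a (p i)) atTop atTop)
    (hmS : Tendsto (fun N => ∑ i ∈ range N, -a (m i)) atTop atTop)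
    (hpr : ∀ n, 0 ≤ a n → ∃ i, p i = n) (hmr : ∀ n, a n < 0 → ∃ j, m j = n) :
    Function.Surjective (rb a s p m) := by
  intro n
  rcases le_or_gt 0 (a n) with hn | hn
  · obtain ⟨i, rfl⟩ := hpr n hn
    have hex : ∃ k, i < ri a s p m k := by
      obtain ⟨k, hk⟩ := (tendsto_atTop.mp (tendsto_ri a s p m hmS) (i+1)).exists
      exact ⟨k, hk⟩
    have hk : i < ri a s p m (Nat.find hex) := Nat.find_spec hex
    have hk0 : Nat.find hex ≠ 0 := by
      intro h
      rw [h, ri_zero] at hk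
      omega
    obtain ⟨k', hkeq⟩ : ∃ k', Nat.find hex = k' + 1 := ⟨Nat.find hex - 1, by omega⟩
    have hk'lt : ¬ i < ri a s p m k' := Nat.find_min hex (by omega)
    rw [hkeq] at hk
    have hle := ri_succ_le a s p m k'
    by_cases hb : rt a s p m k' ≤ s
    · refine ⟨k', ?_⟩
      rw [rb, if_pos hb]
      congr 1
      omega
    · exfalso
      have := (step_neg a s p m hb).1
      omega
  · obtain ⟨j, rfl⟩ := hmr n hn
    have hex : ∃ k, j < rj a s p m k := by
      obtain ⟨k, hk⟩ := (tendsto_atTop.mp (tendsto_rj a s p m hpS) (j+1)).exists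
      exact ⟨k, hk⟩
    have hk : j < rj a s p m (Nat.find hex) := Nat.find_spec hex
    have hk0 : Nat.find hex ≠ 0 := by
      intro h
      rw [h, rj_zero] at hk
      omega
    obtain ⟨k', hkeq⟩ : ∃ k', Nat.find hex = k' + 1 := ⟨Nat.find hex - 1, by omega⟩
    have hk'lt : ¬ j < rj a s p m k' := Nat.find_min hex (by omega)
    rw [hkeq] at hk
    have hle := rj_succ_le a s p m k'
    by_cases hb : rt a s p m k' ≤ s
    · exfalso
      have := (step_pos a s p m hb).2.1
      omega
    · refine ⟨k', ?_⟩
      rw [rb, if_neg hb]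
      congr 1
      omega

lemma rt_tendsto (hp0 : ∀ i, 0 ≤ a (p i)) (hm0 : ∀ j, a (m j) < 0)
    (hpS : Tendsto (fun N => ∑ i ∈ range N, a (p i)) atTop atTop)
    (hmS : Tendsto (fun N => ∑ i ∈ range N, -a (m i)) atTop atTop)
    (hpm : StrictMono p) (hmm : StrictMono m)
    (ha0 : Tendsto a atTop (nhds 0)) :
    Tendsto (rt a s p m) atTop (nhds s) := by
  rw [Metric.tendsto_atTop]
  intro ε hε
  have hδ : (0:ℝ) < ε / 2 := by linarith
  obtain ⟨N, hN⟩ := Metric.tendsto_atTop.mp ha0 (ε/2) hδ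
  have hN' : ∀ n, N ≤ n → |a n| < ε / 2 := by
    intro n hn
    have := hN n hn
    rwa [Real.dist_eq, sub_zero] at this
  obtain ⟨k1, hk1⟩ := eventually_atTop.mp
    ((tendsto_ri a s p m hmS).eventually_ge_atTop N)
  obtain ⟨k2, hk2⟩ := eventually_atTop.mp
    ((tendsto_rj a s p m hpS).eventually_ge_atTop N)
  set K := max k1 k2 with hK
  have hsmall : ∀ k, K ≤ k → |a (rb a s p m k)| < ε / 2 := by
    intro k hk
    rw [rb]
    split
    · exact hN' _ (le_trans (hk1 k (le_trans (le_max_left _ _) hk)) hpm.le_apply)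
    · exact hN' _ (le_trans (hk2 k (le_trans (le_max_right _ _) hk)) hmm.le_apply)
  obtain ⟨ka, hKka, hka⟩ := exists_rt_le a s p m hmS K
  obtain ⟨kb, hkakb, hkb⟩ := exists_lt_rt a s p m hpS (ka + 1)
  have hexQ : ∃ r, s < rt a s p m (ka + r) :=
    ⟨kb - ka, by rwa [Nat.add_sub_cancel' (by omega)]⟩
  set r := Nat.find hexQ with hr
  have hrQ : s < rt a s p m (ka + r) := Nat.find_spec hexQ
  have hr0 : r ≠ 0 := by
    intro h
    rw [h, Nat.add_zero] at hrQ
    linarith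
  obtain ⟨r', hreq⟩ : ∃ r', r = r' + 1 := ⟨r - 1, by omega⟩
  have hr' : ¬ s < rt a s p m (ka + r') := Nat.find_min hexQ (by omega)
  push_neg at hr'
  -- entry: |rt (ka + r) - s| ≤ ε/2
  have hKk0 : K ≤ ka + r' := by omega
  have hstep := (step_pos a s p m hr').2.2
  have hterm : |a (rb a s p m (ka + r'))| < ε / 2 := hsmall _ hKk0
  rw [rb, if_pos hr'] at hterm
  have hrQ' : s < rt a s p m ((ka + r') + 1) := by
    rwa [show (ka + r') + 1 = ka + r by omega]
  rw [hstep] at hrQ'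
  have hbase : |rt a s p m ((ka + r') + 1) - s| ≤ ε / 2 := by
    rw [hstep]
    have h1 := hp0 (ri a s p m (ka + r'))
    have h2 := abs_lt.mp hterm
    rw [abs_le]
    constructor <;> linarith
  have hinv : ∀ k, (ka + r') + 1 ≤ k → |rt a s p m k - s| ≤ ε / 2 := by
    intro k hk
    induction k, hk using Nat.le_induction with
    | base => exact hbase
    | succ k hk ih =>
      have hKk : K ≤ k := by omega
      have hterm2 := hsmall k hKk
      rw [rt_succ]
      by_cases hb : rt a s p m k ≤ s
      · rw [rb, if_pos hb] at hterm2 ⊢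
        have h1 := hp0 (ri a s p m k)
        have h2 := abs_lt.mp hterm2
        have h3 := abs_le.mp ih
        rw [abs_le]
        constructor <;> linarith
      · rw [rb, if_neg hb] at hterm2 ⊢
        have h1 := hm0 (rj a s p m k)
        have h2 := abs_lt.mp hterm2
        have h3 := abs_le.mp ih
        push_neg at hb
        rw [abs_le]
        constructor <;> linarith
  refine ⟨(ka + r') + 1, fun k hk => ?_⟩
  rw [Real.dist_eq]
  exact lt_of_le_of_lt (hinv k hk) (by linarith)

lemma count_le' (P : ℕ → Prop) [DecidablePred P] (n : ℕ) : Nat.count P n ≤ n := by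
  induction n with
  | zero => simp
  | succ n ih => rw [Nat.count_succ]; split <;> omega

lemma sum_ite_eq_sum_nth (f : ℕ → ℝ) (P : ℕ → Prop) [DecidablePred P] (N : ℕ) :
    ∑ n ∈ range N, (if P n then f n else 0)
      = ∑ i ∈ range (Nat.count P N), f (Nat.nth P i) := by
  induction N with
  | zero => simp
  | succ n ih =>
    rw [sum_range_succ, ih, Nat.count_succ]
    by_cases h : P n
    · rw [if_pos h, if_pos h, sum_range_succ, Nat.nth_count h]
    · rw [if_neg h, if_neg h, add_zero, add_zero]

end RiemannRearr

open RiemannRearr in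
theorem riemann_rearrangement (a : ℕ → ℝ)
    (hconv : ∃ l : ℝ, Tendsto (fun N => ∑ n ∈ range N, a n) atTop (nhds l))
    (habs : ¬ Summable (fun n => |a n|)) (s : ℝ) :
    ∃ π : Equiv.Perm ℕ,
      Tendsto (fun N => ∑ n ∈ range N, a (π n)) atTop (nhds s) := by
  classical
  obtain ⟨l, hS⟩ := hconv
  have hT : Tendsto (fun N => ∑ n ∈ range N, |a n|) atTop atTop :=
    (not_summable_iff_tendsto_nat_atTop_of_nonneg (fun n => abs_nonneg _)).mp habs
  -- a tends to 0
  have ha0 : Tendsto a atTop (nhds 0) := by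
    have h1 : Tendsto (fun n => (∑ k ∈ range (n+1), a k) - ∑ k ∈ range n, a k)
        atTop (nhds (l - l)) := (hS.comp (tendsto_add_atTop_nat 1)).sub hS
    rw [sub_self] at h1
    refine h1.congr fun n => ?_
    rw [sum_range_succ]
    ring
  set P : ℕ → Prop := fun n => 0 ≤ a n with hPdef
  set M : ℕ → Prop := fun n => a n < 0 with hMdef
  -- divergence of positive part partial sums
  have hSp : Tendsto (fun N => ∑ n ∈ range N, (if P n then a n else 0)) atTop atTop := by
    have h1 : Tendsto (fun N => ((∑ n ∈ range N, a n) + ∑ n ∈ range N, |a n|) / 2)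
        atTop atTop := (hS.add_atTop hT).atTop_div_const (by norm_num)
    refine h1.congr fun N => ?_
    rw [← Finset.sum_add_distrib, Finset.sum_div]
    refine sum_congr rfl fun n _ => ?_
    by_cases h : P n
    · rw [if_pos h, abs_of_nonneg h]
      ring
    · rw [if_neg h, abs_of_neg (by simpa [hPdef] using h)]
      ring
  have hSm : Tendsto (fun N => ∑ n ∈ range N, (if M n then -a n else 0)) atTop atTop := by
    have h1 : Tendsto (fun N => ((∑ n ∈ range N, -a n) + ∑ n ∈ range N, |a n|) / 2)
        atTop atTop := by
      have h2 : Tendsto (fun N => -∑ n ∈ range N, a n) atTop (nhds (-l)) := hS.neg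
      have h3 := (h2.add_atTop hT).atTop_div_const (show (0:ℝ) < 2 by norm_num)
      refine h3.congr fun N => ?_
      rw [Finset.sum_neg_distrib]
    refine h1.congr fun N => ?_
    rw [← Finset.sum_add_distrib, Finset.sum_div]
    refine sum_congr rfl fun n _ => ?_
    by_cases h : M n
    · rw [if_pos h, abs_of_neg h]
      ring
    · rw [if_neg h, abs_of_nonneg (by simpa [hMdef, not_lt] using h)]
      ring
  -- infinitude
  have hPinf : (setOf P).Infinite := by
    by_contra hfin
    rw [Set.not_infinite] at hfin
    have hsum : Summable (fun n => if P n then a n else 0) := by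
      apply summable_of_ne_finset_zero (s := hfin.toFinset)
      intro n hn
      rw [Set.Finite.mem_toFinset] at hn
      exact if_neg hn
    exact not_tendsto_atTop_of_tendsto_nhds hsum.hasSum.tendsto_sum_nat hSp
  have hMinf : (setOf M).Infinite := by
    by_contra hfin
    rw [Set.not_infinite] at hfin
    have hsum : Summable (fun n => if M n then -a n else 0) := by
      apply summable_of_ne_finset_zero (s := hfin.toFinset)
      intro n hn
      rw [Set.Finite.mem_toFinset] at hn
      exact if_neg hn
    exact not_tendsto_atTop_of_tendsto_nhds hsum.hasSum.tendsto_sum_nat hSm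
  set p : ℕ → ℕ := Nat.nth P with hpdef
  set m : ℕ → ℕ := Nat.nth M with hmdef
  have hp0 : ∀ i, 0 ≤ a (p i) := fun i => Nat.nth_mem_of_infinite hPinf i
  have hm0 : ∀ j, a (m j) < 0 := fun j => Nat.nth_mem_of_infinite hMinf j
  have hpm : StrictMono p := Nat.nth_strictMono hPinf
  have hmm : StrictMono m := Nat.nth_strictMono hMinf
  have hpr : ∀ n, 0 ≤ a n → ∃ i, p i = n := fun n hn => Nat.subset_range_nth hn
  have hmr : ∀ n, a n < 0 → ∃ j, m j = n := fun n hn => Nat.subset_range_nth hn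
  -- divergence of enumerated sums
  have hpS : Tendsto (fun N => ∑ i ∈ range N, a (p i)) atTop atTop := by
    have hmono : Monotone (fun N => ∑ i ∈ range N, a (p i)) := by
      apply monotone_nat_of_le_succ
      intro N
      rw [sum_range_succ]
      exact le_add_of_nonneg_right (hp0 N)
    apply tendsto_atTop_mono _ hSp
    intro N
    rw [sum_ite_eq_sum_nth]
    exact hmono (count_le' P N)
  have hmS : Tendsto (fun N => ∑ i ∈ range N, -a (m i)) atTop atTop := by
    have hmono : Monotone (fun N => ∑ i ∈ range N, -a (m i)) := by
      apply monotone_nat_of_le_succ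
      intro N
      rw [sum_range_succ]
      exact le_add_of_nonneg_right (by linarith [hm0 N])
    apply tendsto_atTop_mono _ hSm
    intro N
    rw [sum_ite_eq_sum_nth (fun n => -a n) M]
    exact hmono (count_le' M N)
  refine ⟨Equiv.ofBijective (rb a s p m)
    ⟨rb_inj a s p m hp0 hm0 hpm hmm, rb_surj a s p m hpS hmS hpr hmr⟩, ?_⟩
  have := rt_tendsto a s p m hp0 hm0 hpS hmS hpm hmm ha0
  exact this.congr fun N => (sum_rb a s p m N).symm
end

section
/- Multivariate reduction lemma: let f : ℂ^M → ℂ be an entire (analytic) function such that for every coordinate m and every fixed z^(m) of the remaining variables, the univariate entire function w ↦ f(w, z^(m)) satisfies the Gauss-Lucas relation, i.e., its critical points lie in the closure of the convex hull of its zeros. Then every zero of any partial derivative ∂f/∂z_m lies in the closure of the separately convex hull of the zero set of f. -/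
open Filter

def SeparatelyConvex {M : ℕ} (K : Set (Fin M → ℂ)) : Prop :=
  ∀ (m : Fin M) (z : Fin M → ℂ), Convex ℝ {w : ℂ | Function.update z m w ∈ K}

def sepConvexHull {M : ℕ} (A : Set (Fin M → ℂ)) : Set (Fin M → ℂ) :=
  ⋂₀ {K : Set (Fin M → ℂ) | SeparatelyConvex K ∧ A ⊆ K}

/-- Partial derivative of `f` in the `m`-th coordinate at `z`. -/
noncomputable def pd {M : ℕ} (f : (Fin M → ℂ) → ℂ) (m : Fin M) (z : Fin M → ℂ) : ℂ :=
  deriv (fun w => f (Function.update z m w)) (z m)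

/-! The critical point `w = z m` of the slice `w ↦ f (update z m w)` lies in the closure of the
convex hull of the slice's zeros. Every slice of the separately convex hull of `f⁻¹' {0}` is
convex and contains the slice's zeros, hence that convex hull; pushing the closure forward along
the continuous embedding `w ↦ update z m w` puts `update z m (z m) = z` in the closure of the
separately convex hull. -/

section SeparatelyConvex

variable {M : ℕ}

theorem separatelyConvex_sInter {S : Set (Set (Fin M → ℂ))} (hS : ∀ K ∈ S, SeparatelyConvex K) :
    SeparatelyConvex (⋂₀ S) := by
  intro m z
  simp only [Set.mem_sInter, Set.ofPred_forall]
  exact convex_iInter fun K => convex_iInter fun hK => hS K hK m z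

theorem separatelyConvex_sepConvexHull (A : Set (Fin M → ℂ)) :
    SeparatelyConvex (sepConvexHull A) :=
  separatelyConvex_sInter fun _ hK => hK.1

theorem subset_sepConvexHull (A : Set (Fin M → ℂ)) : A ⊆ sepConvexHull A :=
  fun _ hx _ hK => hK.2 hx

theorem SeparatelyConvex.convexHull_slice_subset {A K : Set (Fin M → ℂ)}
    (hK : SeparatelyConvex K) (hAK : A ⊆ K) (m : Fin M) (z : Fin M → ℂ) :
    convexHull ℝ {w : ℂ | Function.update z m w ∈ A} ⊆ {w : ℂ | Function.update z m w ∈ K} :=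
  convexHull_min (fun _ hw => hAK hw) (hK m z)

theorem update_mem_closure_sepConvexHull {A : Set (Fin M → ℂ)} {m : Fin M} {z : Fin M → ℂ}
    {w : ℂ} (hw : w ∈ closure (convexHull ℝ {u : ℂ | Function.update z m u ∈ A})) :
    Function.update z m w ∈ closure (sepConvexHull A) :=
  map_mem_closure (continuous_const.update m continuous_id) hw
    ((separatelyConvex_sepConvexHull A).convexHull_slice_subset (subset_sepConvexHull A) m z)

end SeparatelyConvex

theorem multivariate_reduction_general {M : ℕ} (f : (Fin M → ℂ) → ℂ)
    (hGL : ∀ (m : Fin M) (z : Fin M → ℂ) (w : ℂ),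
      deriv (fun u => f (Function.update z m u)) w = 0 →
      w ∈ closure (convexHull ℝ {u : ℂ | f (Function.update z m u) = 0}))
    (m : Fin M) (z : Fin M → ℂ) (hz : pd f m z = 0) :
    z ∈ closure (sepConvexHull (f ⁻¹' {0})) := by
  have hcrit := hGL m z (z m) hz
  simpa only [Function.update_eq_self] using
    update_mem_closure_sepConvexHull (A := f ⁻¹' {0}) hcrit

theorem multivariate_reduction {M : ℕ} (f : (Fin M → ℂ) → ℂ)
    (hf : ∀ z, AnalyticAt ℂ f z)
    (hGL : ∀ (m : Fin M) (z : Fin M → ℂ) (w : ℂ),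
      deriv (fun u => f (Function.update z m u)) w = 0 →
      w ∈ closure (convexHull ℝ {u : ℂ | f (Function.update z m u) = 0}))
    (m : Fin M) (z : Fin M → ℂ) (hz : pd f m z = 0) :
    z ∈ closure (sepConvexHull (f ⁻¹' {0})) :=
  multivariate_reduction_general f hGL m z hz
end

section
/- Stability preservation for multivariate polynomials: if f is a stable polynomial in M complex variables (f has no roots z with Im(z_m) > 0 for all m) and ∂f/∂z_m is not identically zero, then ∂f/∂z_m is stable. -/
open Filter

/-!
Fix `z` in the upper half space and put `g(w) = f(z₁, …, w, …, z_M)` (`w` in slot `m`). Then `g`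
has no zeros in the upper half-plane, and by Gauss–Lucas neither has `g'`, as long as `g` is not
constant. For that it suffices that the leading coefficient `c` of `f` in `x_m` has no zeros in
the upper half space. Restricted to a complex line through `z`, `c` is the limit of `w⁻ⁿ f(…, w, …)`
as `w → i∞`; these functions have no zeros on a small disc, and the bound
`‖a_k‖ δᵏ ≤ (n choose k) ‖a₀‖` on the coefficients of a polynomial without zeros in the disc of
radius `δ` survives in the limit, so if `c` vanished at `z` it would vanish on the whole line, which we
choose through a point where `c ≠ 0`.
-/

open Polynomial

namespace Polynomial

section CoeffBound

variable {K : Type*} [NormedField K]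

theorem norm_coeff_mul_X_sub_C_mul_pow_le {p : K[X]} {n : ℕ} {δ : ℝ} {r : K} (hδ : 0 ≤ δ)
    (hr : δ ≤ ‖r‖) (hp : ∀ k, ‖p.coeff k‖ * δ ^ k ≤ n.choose k * ‖p.coeff 0‖) (k : ℕ) :
    ‖(p * (X - C r)).coeff k‖ * δ ^ k ≤ (n + 1).choose k * ‖(p * (X - C r)).coeff 0‖ := by
  have hcoeff0 : ‖(p * (X - C r)).coeff 0‖ = ‖p.coeff 0‖ * ‖r‖ := by simp
  rw [hcoeff0]
  cases k with
  | zero => simp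
  | succ j =>
    have hj := hp j
    have hj1 := hp (j + 1)
    calc ‖(p * (X - C r)).coeff (j + 1)‖ * δ ^ (j + 1)
        ≤ (‖p.coeff j‖ * δ ^ j) * δ + (‖p.coeff (j + 1)‖ * δ ^ (j + 1)) * ‖r‖ := by
          rw [coeff_mul_X_sub_C]
          grw [norm_sub_le, norm_mul]
          exact le_of_eq (by ring)
      _ ≤ (n.choose j * ‖p.coeff 0‖) * ‖r‖ + (n.choose (j + 1) * ‖p.coeff 0‖) * ‖r‖ := by
          gcongr
      _ = (n + 1).choose (j + 1) * (‖p.coeff 0‖ * ‖r‖) := by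
          rw [Nat.choose_succ_succ', Nat.cast_add]; ring

theorem norm_coeff_C_mul_prod_X_sub_C_mul_pow_le {δ : ℝ} (hδ : 0 ≤ δ) (a : K) (S : Multiset K)
    (hS : ∀ r ∈ S, δ ≤ ‖r‖) (k : ℕ) :
    ‖(C a * (S.map (X - C ·)).prod).coeff k‖ * δ ^ k ≤
      (Multiset.card S).choose k * ‖(C a * (S.map (X - C ·)).prod).coeff 0‖ := by
  induction S using Multiset.induction_on generalizing k with
  | empty => cases k <;> simp
  | cons r S ih =>
    have hprod : C a * ((r ::ₘ S).map (X - C ·)).prod =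
        C a * (S.map (X - C ·)).prod * (X - C r) := by
      rw [Multiset.map_cons, Multiset.prod_cons]; ring
    rw [hprod, Multiset.card_cons]
    exact norm_coeff_mul_X_sub_C_mul_pow_le hδ (hS r (Multiset.mem_cons_self r S))
      (ih fun r hr => hS r (Multiset.mem_cons_of_mem hr)) k

theorem norm_coeff_mul_pow_le_choose_mul [IsAlgClosed K] {q : K[X]} {δ : ℝ} (hδ : 0 ≤ δ)
    (hq : ∀ x ∈ Metric.ball (0 : K) δ, q.eval x ≠ 0) (k : ℕ) :
    ‖q.coeff k‖ * δ ^ k ≤ q.natDegree.choose k * ‖q.coeff 0‖ := by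
  rcases eq_or_ne q 0 with rfl | hq0
  · simp
  have hroots : ∀ r ∈ q.roots, δ ≤ ‖r‖ := fun r hr => by
    by_contra! h
    exact hq r (mem_ball_zero_iff.2 h) ((mem_roots hq0).1 hr)
  have hsplit := IsAlgClosed.splits q
  have h := norm_coeff_C_mul_prod_X_sub_C_mul_pow_le hδ q.leadingCoeff q.roots hroots k
  rwa [← hsplit.eq_prod_roots, ← hsplit.natDegree_eq_card_roots] at h

end CoeffBound

theorem natDegree_eval_C_le {R : Type*} [Semiring R] (p : R[X][X]) (u : R) :
    (p.eval (C u)).natDegree ≤ p.support.sup fun i => (p.coeff i).natDegree := by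
  rw [eval_eq_sum]
  refine natDegree_sum_le_of_forall_le _ _ fun i hi => ?_
  simp only [← C_pow]
  exact (natDegree_mul_C_le _ _).trans (Finset.le_sup (f := fun i => (p.coeff i).natDegree) hi)

theorem continuous_coeff_eval_C {R : Type*} [Semiring R] [TopologicalSpace R]
    [IsTopologicalSemiring R] (p : R[X][X]) (k : ℕ) :
    Continuous fun u => (p.eval (C u)).coeff k := by
  simp_rw [eval_eq_sum_range, finsetSum_coeff, ← C_pow, coeff_mul_C]
  fun_prop

theorem evalEval_reflect_natDegree_ne_zero {K : Type*} [Field K] {Φ : K[X][X]} {u ε : K}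
    (hu : u ≠ 0) (hΦ : Φ.evalEval ε u⁻¹ ≠ 0) : (reflect Φ.natDegree Φ).evalEval ε u ≠ 0 := by
  let := invertibleOfNonzero (inv_ne_zero hu)
  have hinv : ⅟u⁻¹ = u := by rw [invOf_eq_inv, inv_inv]
  rwa [← map_evalRingHom_eval, ← reflect_map, ← hinv, ← eval₂_id, Ne,
    eval₂_reflect_eq_zero_iff _ _ _ _ natDegree_map_le, eval₂_id, map_evalRingHom_eval]

theorem eval_zero_leadingCoeff_ne_zero {Φ : ℂ[X][X]} {δ : ℝ} (hδ : 0 < δ)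
    (hΦ : ∀ w : ℂ, 0 < w.im → ∀ ε ∈ Metric.ball (0 : ℂ) δ, Φ.evalEval ε w ≠ 0) :
    Φ.leadingCoeff.eval 0 ≠ 0 := by
  -- `Ψ(u, ε) = uⁿ Φ(u⁻¹, ε)`, and `Ψ(0, ·)` is the leading coefficient of `Φ`.
  set Ψ := reflect Φ.natDegree Φ
  have hΨ : ∀ u : ℂ, u.im < 0 → ∀ ε ∈ Metric.ball (0 : ℂ) δ, (Ψ.eval (C u)).eval ε ≠ 0 := by
    intro u hu ε hε
    have hu0 : u ≠ 0 := by rintro rfl; simp at hu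
    refine evalEval_reflect_natDegree_ne_zero hu0 (hΦ u⁻¹ ?_ ε hε)
    rw [Complex.inv_im]
    exact div_pos (neg_pos.2 hu) (Complex.normSq_pos.2 hu0)
  set D := Ψ.support.sup fun i => (Ψ.coeff i).natDegree
  have hbound : ∀ k,
      ‖(Ψ.eval (C 0)).coeff k‖ * δ ^ k ≤ D.choose k * ‖(Ψ.eval (C 0)).coeff 0‖ := by
    intro k
    have hclosed : IsClosed
        {u : ℂ | ‖(Ψ.eval (C u)).coeff k‖ * δ ^ k ≤ D.choose k * ‖(Ψ.eval (C u)).coeff 0‖} :=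
      isClosed_le ((continuous_coeff_eval_C Ψ k).norm.mul continuous_const)
        (continuous_const.mul (continuous_coeff_eval_C Ψ 0).norm)
    have hlower : {u : ℂ | u.im < 0} ⊆
        {u : ℂ | ‖(Ψ.eval (C u)).coeff k‖ * δ ^ k ≤ D.choose k * ‖(Ψ.eval (C u)).coeff 0‖} :=
      fun u hu => (norm_coeff_mul_pow_le_choose_mul hδ.le (hΨ u hu) k).trans <| by
        gcongr
        exact natDegree_eval_C_le Ψ u
    have h0 : (0 : ℂ) ∈ closure {u : ℂ | u.im < 0} := by simp
    exact hclosed.closure_subset_iff.2 hlower h0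
  have hlc : Ψ.eval (C 0) = Φ.leadingCoeff := by
    rw [map_zero, ← coeff_zero_eq_eval_zero, coeff_reflect, revAt_zero]; rfl
  intro hlc0
  rw [hlc, coeff_zero_eq_eval_zero, hlc0, norm_zero] at hbound
  have hΦ0 : Φ = 0 := by
    rw [← leadingCoeff_eq_zero]
    ext k
    have hk := hbound k
    rw [mul_zero] at hk
    simpa using nonpos_of_mul_nonpos_left hk (pow_pos hδ k)
  exact hΦ Complex.I (by simp) 0 (Metric.mem_ball_self hδ) (by simp [hΦ0])

theorem eval_leadingCoeff_ne_zero_of_stable {σ : Type*} [Finite σ]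
    {F : (MvPolynomial σ ℂ)[X]} (hF : F ≠ 0)
    (hstable : ∀ z : σ → ℂ, (∀ k, 0 < (z k).im) → ∀ w : ℂ, 0 < w.im →
      (F.map (MvPolynomial.eval z)).eval w ≠ 0)
    {z : σ → ℂ} (hz : ∀ k, 0 < (z k).im) : MvPolynomial.eval z F.leadingCoeff ≠ 0 := by
  obtain ⟨y, hy⟩ : ∃ y, MvPolynomial.eval y F.leadingCoeff ≠ 0 := by
    by_contra! h
    exact leadingCoeff_ne_zero.2 hF (MvPolynomial.funext fun x => by simp [h x])
  set line : ℂ → σ → ℂ := fun ε k => z k + ε * (y k - z k)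
  have hline0 : line 0 = z := by simp [line]
  have hline1 : line 1 = y := by ext; simp [line]
  obtain ⟨δ, hδ, hball⟩ : ∃ δ > 0, Metric.ball 0 δ ⊆ {ε : ℂ | ∀ k, 0 < (line ε k).im} := by
    have hopen : IsOpen {ε : ℂ | ∀ k, 0 < (line ε k).im} := by
      simp only [Set.ofPred_forall]
      exact isOpen_iInter_of_finite fun k => isOpen_lt continuous_const (by fun_prop)
    exact Metric.isOpen_iff.1 hopen 0 (by simpa [hline0] using hz)
  set ψ : MvPolynomial σ ℂ →ₐ[ℂ] ℂ[X] := MvPolynomial.aeval fun k => C (z k) + C (y k - z k) * X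
  have hψ : ∀ ε, (evalRingHom ε).comp ψ.toRingHom = MvPolynomial.eval (line ε) := by
    intro ε
    ext <;> simp [ψ, line, mul_comm]
  have hψ_apply : ∀ p ε, (ψ p).eval ε = MvPolynomial.eval (line ε) p := fun p ε =>
    RingHom.congr_fun (hψ ε) p
  have hψlc : ψ F.leadingCoeff ≠ 0 := fun h => hy <| by
    rw [← hline1, ← hψ_apply, h, eval_zero]
  have key := eval_zero_leadingCoeff_ne_zero hδ (Φ := F.map ψ.toRingHom) fun w hw ε hε => by
    rw [← map_evalRingHom_eval, Polynomial.map_map, hψ]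
    exact hstable _ (hball hε) w hw
  rwa [leadingCoeff_map_of_leadingCoeff_ne_zero _ hψlc, AlgHom.toRingHom_eq_coe,
    RingHom.coe_coe, hψ_apply, hline0] at key

theorem eval_derivative_ne_zero_of_im_pos {g : ℂ[X]}
    (hg : ∀ w : ℂ, 0 < w.im → g.eval w ≠ 0) (hdeg : 0 < g.degree) {a : ℂ} (ha : 0 < a.im) :
    g.derivative.eval a ≠ 0 := by
  intro h
  have hroot : a ∈ g.derivative.rootSet ℂ := by
    rw [mem_rootSet, coe_aeval_eq_eval]
    exact ⟨derivative_ne_zero.2 (natDegree_pos_iff_degree_pos.2 hdeg).ne', h⟩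
  have hroots : g.rootSet ℂ ⊆ {w : ℂ | w.im ≤ 0} := fun r hr => by
    rw [mem_rootSet, coe_aeval_eq_eval] at hr
    exact not_lt.1 fun hr' => hg r hr' hr.2
  have hconv := convexHull_min hroots (convex_halfSpace_im_le 0)
  exact (hconv (rootSet_derivative_subset_convexHull_rootSet hdeg hroot)).not_gt ha

end Polynomial

namespace MvPolynomial

variable {R σ : Type*} [CommSemiring R] [DecidableEq σ]

/-- `p` as a polynomial in `X i`. The coefficients are taken in all of `MvPolynomial σ R`, not in
the polynomials in the other variables: only evaluation and differentiation in `X i` are used. -/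
noncomputable def toPolynomialIn (i : σ) : MvPolynomial σ R →ₐ[R] (MvPolynomial σ R)[X] :=
  aeval fun j => if j = i then Polynomial.X else Polynomial.C (X j)

@[simp]
theorem toPolynomialIn_C (i : σ) (a : R) : toPolynomialIn i (C a) = Polynomial.C (C a) := by
  simp [toPolynomialIn, algebraMap_eq]

@[simp]
theorem toPolynomialIn_X_self (i : σ) :
    toPolynomialIn i (X i : MvPolynomial σ R) = Polynomial.X := by
  simp [toPolynomialIn]

@[simp]
theorem toPolynomialIn_X_of_ne {i j : σ} (h : j ≠ i) :
    toPolynomialIn i (X j : MvPolynomial σ R) = Polynomial.C (X j) := by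
  simp [toPolynomialIn, h]

theorem eval_X_toPolynomialIn (i : σ) (p : MvPolynomial σ R) :
    (toPolynomialIn i p).eval (X i) = p := by
  induction p using MvPolynomial.induction_on with
  | C a => simp
  | add p q hp hq => simp [hp, hq]
  | mul_X p j hp => by_cases hj : j = i <;> simp [hj, hp]

theorem toPolynomialIn_injective (i : σ) : Function.Injective (toPolynomialIn (R := R) i) :=
  Function.LeftInverse.injective (eval_X_toPolynomialIn i)

theorem toPolynomialIn_pderiv (i : σ) (p : MvPolynomial σ R) :
    toPolynomialIn i (pderiv i p) = derivative (toPolynomialIn i p) := by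
  induction p using MvPolynomial.induction_on with
  | C a => simp
  | add p q hp hq => simp [hp, hq]
  | mul_X p j hp =>
    by_cases hj : j = i
    · subst hj
      simp only [pderiv_mul, pderiv_X_self, map_add, map_mul, hp, toPolynomialIn_X_self,
        derivative_mul, derivative_X, mul_one]
    · simp only [pderiv_mul, pderiv_X_of_ne hj, map_mul, hp, toPolynomialIn_X_of_ne hj,
        derivative_mul, derivative_C, mul_zero, add_zero]

theorem eval_map_toPolynomialIn (z : σ → R) (i : σ) (w : R) (p : MvPolynomial σ R) :
    ((toPolynomialIn i p).map (eval z)).eval w = eval (Function.update z i w) p := by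
  induction p using MvPolynomial.induction_on with
  | C a => simp
  | add p q hp hq => simp [hp, hq]
  | mul_X p j hp => by_cases hj : j = i <;> simp [hj, hp]

end MvPolynomial

theorem mv_polynomial_stability_preservation {M : ℕ} (f : MvPolynomial (Fin M) ℂ)
    (hstable : ∀ z : Fin M → ℂ, (∀ k, 0 < (z k).im) → MvPolynomial.eval z f ≠ 0)
    (m : Fin M) (hm : MvPolynomial.pderiv m f ≠ 0)
    (z : Fin M → ℂ) (hz : ∀ k, 0 < (z k).im) :
    MvPolynomial.eval z (MvPolynomial.pderiv m f) ≠ 0 := by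
  set F := MvPolynomial.toPolynomialIn m f
  have hF : ∀ z' : Fin M → ℂ, (∀ k, 0 < (z' k).im) → ∀ w : ℂ, 0 < w.im →
      (F.map (MvPolynomial.eval z')).eval w ≠ 0 := fun z' hz' w hw => by
    rw [MvPolynomial.eval_map_toPolynomialIn]
    refine hstable _ fun k => ?_
    rcases eq_or_ne k m with rfl | hk
    · simpa using hw
    · simpa [hk] using hz' k
  have hF' : derivative F ≠ 0 := by
    rw [← MvPolynomial.toPolynomialIn_pderiv]
    exact (map_ne_zero_iff _ (MvPolynomial.toPolynomialIn_injective m)).2 hm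
  have hlc : MvPolynomial.eval z F.leadingCoeff ≠ 0 :=
    eval_leadingCoeff_ne_zero_of_stable (fun h => hF' (by rw [h, derivative_zero])) hF hz
  have hdeg : 0 < (F.map (MvPolynomial.eval z)).degree := by
    rw [← natDegree_pos_iff_degree_pos, natDegree_map_of_leadingCoeff_ne_zero _ hlc,
      Nat.pos_iff_ne_zero, ← derivative_ne_zero]
    exact hF'
  have h := eval_derivative_ne_zero_of_im_pos (hF z hz) hdeg (hz m)
  rwa [derivative_map, ← MvPolynomial.toPolynomialIn_pderiv,
    MvPolynomial.eval_map_toPolynomialIn, Function.update_eq_self] at h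
end

section
/- Convergence of rearranged partial products: let g(z) = ∏_{n=1}^∞ (1 − z/γ_n) exp(∑_{r=1}^p r^{-1}(z/γ_n)^r) be a canonical product of genus p (so ∑ |γ_n|^{-(1+p)} < ∞), and suppose the ordering of the roots satisfies lim_{N→∞} ∑_{n=1}^N γ_n^{-r} = 0 for each r = 1,…,p. Then the plain partial products f_N(z) = ∏_{n=1}^N (1 − z/γ_n) converge to g(z) uniformly on compact subsets of ℂ. -/
/-!
With `E_p(u) = (1 - u) exp(u + u²/2 + ⋯ + u^p/p)` and `V_N(r) = ∑_{n<N} γₙ^{-r}`, the plain partial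
products factor as `∏_{n<N} (1 - z/γₙ) = (∏_{n<N} E_p(z/γₙ)) · exp(-∑_{r=1}^p V_N(r) z^r / r)`.
Since `V_N(r) → 0`, the polynomial in the exponent tends to `0` locally uniformly, so the
correcting exponential tends to `1` locally uniformly.
-/

open Filter Finset Topology

section LocallyUniformConst

variable {ι α β : Type*} [TopologicalSpace α] [UniformSpace β] {F : ι → α → β} {p : Filter ι}

theorem tendstoLocallyUniformly_const_iff {c : β} :
    TendstoLocallyUniformly F (fun _ => c) p ↔
      ∀ x, Tendsto (fun y : ι × α => F y.1 y.2) (p ×ˢ 𝓝 x) (𝓝 c) := by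
  simp only [tendstoLocallyUniformly_iff_forall_tendsto, ← Uniform.tendsto_nhds_right]

theorem ContinuousAt.comp_tendstoLocallyUniformly_const {γ : Type*} [UniformSpace γ] {c : β}
    {φ : β → γ} (hφ : ContinuousAt φ c) (hF : TendstoLocallyUniformly F (fun _ => c) p) :
    TendstoLocallyUniformly (fun i x => φ (F i x)) (fun _ => φ c) p :=
  tendstoLocallyUniformly_const_iff.2 fun x => hφ.tendsto.comp
    (tendstoLocallyUniformly_const_iff.1 hF x)

end LocallyUniformConst

theorem tendstoLocallyUniformly_sum_mul_pow_of_tendsto_zero {ι R : Type*} [UniformSpace R]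
    [CommSemiring R] [IsTopologicalSemiring R] {p : Filter ι} {s : Finset ℕ} {a : ι → ℕ → R}
    (ha : ∀ r ∈ s, Tendsto (a · r) p (𝓝 0)) :
    TendstoLocallyUniformly (fun i (z : R) => ∑ r ∈ s, a i r * z ^ r) (fun _ => 0) p := by
  refine tendstoLocallyUniformly_const_iff.2 fun x => ?_
  rw [← sum_const_zero (s := s)]
  refine tendsto_finsetSum s fun r hr => ?_
  simpa using ((ha r hr).comp tendsto_fst).mul (((continuous_pow r).tendsto x).comp tendsto_snd)

theorem prod_one_sub_div_eq_prod_mul_cexp {ι : Type*} (s : Finset ι) (R : Finset ℕ)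
    (γ : ι → ℂ) (z : ℂ) :
    ∏ n ∈ s, (1 - z / γ n) =
      (∏ n ∈ s, (1 - z / γ n) * Complex.exp (∑ r ∈ R, (r : ℂ)⁻¹ * (z / γ n) ^ r)) *
        Complex.exp (-∑ r ∈ R, ((r : ℂ)⁻¹ * ∑ n ∈ s, (γ n)⁻¹ ^ r) * z ^ r) := by
  have hexponent : ∑ n ∈ s, ∑ r ∈ R, (r : ℂ)⁻¹ * (z / γ n) ^ r =
      ∑ r ∈ R, ((r : ℂ)⁻¹ * ∑ n ∈ s, (γ n)⁻¹ ^ r) * z ^ r := by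
    rw [sum_comm]
    refine sum_congr rfl fun r _ => ?_
    simp only [mul_sum, sum_mul, div_eq_mul_inv, mul_pow]
    exact sum_congr rfl fun n _ => by ring
  rw [prod_mul_distrib, ← Complex.exp_sum, hexponent, mul_assoc, ← Complex.exp_add,
    add_neg_cancel, Complex.exp_zero, mul_one]

theorem rearranged_partial_products_converge_general (p : ℕ) (γ : ℕ → ℂ)
    (g : ℂ → ℂ)
    (hg : TendstoLocallyUniformly
      (fun N z => ∏ n ∈ range N,
        (1 - z / γ n) * Complex.exp (∑ r ∈ Icc 1 p, (r : ℂ)⁻¹ * (z / γ n) ^ r))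
      g atTop)
    (hV : ∀ r ∈ Icc 1 p,
      Tendsto (fun N => ∑ n ∈ range N, (γ n)⁻¹ ^ r) atTop (nhds 0)) :
    TendstoLocallyUniformly (fun N z => ∏ n ∈ range N, (1 - z / γ n)) g atTop := by
  have hexponent := tendstoLocallyUniformly_sum_mul_pow_of_tendsto_zero
    (a := fun N (r : ℕ) => (r : ℂ)⁻¹ * ∑ n ∈ range N, (γ n)⁻¹ ^ r)
    fun r hr => by simpa using (hV r hr).const_mul (r : ℂ)⁻¹
  have hcorrection := ((Complex.continuous_exp.comp continuous_neg).continuousAt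
    (x := (0 : ℂ))).comp_tendstoLocallyUniformly_const hexponent
  have hgc : Continuous g := hg.continuous (Frequently.of_forall fun N => by fun_prop)
  refine ((hg.mul₀ hcorrection hgc continuous_const).congr fun N z => ?_).congr_right fun z => ?_
  · exact (prod_one_sub_div_eq_prod_mul_cexp _ _ γ z).symm
  · simp

theorem rearranged_partial_products_converge (p : ℕ) (γ : ℕ → ℂ)
    (hγ : ∀ n, γ n ≠ 0)
    (hgenus : Summable (fun n => (1 / ‖γ n‖) ^ (p + 1)))
    (g : ℂ → ℂ)
    (hg : TendstoLocallyUniformly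
      (fun N z => ∏ n ∈ range N,
        (1 - z / γ n) * Complex.exp (∑ r ∈ Icc 1 p, (r : ℂ)⁻¹ * (z / γ n) ^ r))
      g atTop)
    (hV : ∀ r ∈ Icc 1 p,
      Tendsto (fun N => ∑ n ∈ range N, (γ n)⁻¹ ^ r) atTop (nhds 0)) :
    TendstoLocallyUniformly (fun N z => ∏ n ∈ range N, (1 - z / γ n)) g atTop :=
  rearranged_partial_products_converge_general p γ g hg hV
end

section
/- Gauss-Lucas theorem for rearrangeable entire functions: let f(z) = z^q g(z) where q ≥ 0 and g is a canonical product of genus p whose nonzero roots (γ_n) can be ordered so that ∑_{n=1}^N γ_n^{-r} → 0 as N → ∞ for each r = 1,…,p. Then every zero of f' lies in the closure of the convex hull of the zero set of f. -/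
/-!
If `w` lay outside the closed convex hull of the zeros of `f`, a separating real functional
would give `c` with `Re (c / (w - z)) > 0` for every zero `z`. Logarithmic differentiation of the
canonical product gives `g'/g (w) = ∑ (w/γₙ)^p / (w - γₙ)`, absolutely convergent by the genus
condition, and `(w/γ)^p / (w - γ) = 1/(w - γ) + ∑_{r ≤ p} w^(r-1) γ^(-r)`. In the rearranged order
the correction terms sum to `0`, so `0 = f'/f (w) = q/w + lim ∑_{n < N} 1/(w - γ_{π n})`; after
multiplying by `c` every term has positive real part, which is absurd.
-/

open Filter Finset

noncomputable def weierstrassFactor (p : ℕ) (u : ℂ) : ℂ :=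
  (1 - u) * Complex.exp (∑ r ∈ Icc 1 p, (r : ℂ)⁻¹ * u ^ r)

lemma weierstrassFactor_eq_zero_iff {p : ℕ} {u : ℂ} : weierstrassFactor p u = 0 ↔ u = 1 := by
  rw [weierstrassFactor, mul_eq_zero, sub_eq_zero, eq_comm]
  simp [Complex.exp_ne_zero]

lemma one_sub_mul_sum_Icc_pow_sub_one (p : ℕ) (u : ℂ) :
    (1 - u) * ∑ r ∈ Icc 1 p, u ^ (r - 1) = 1 - u ^ p := by
  rw [← Finset.Ico_add_one_right_eq_Icc, Finset.sum_Ico_eq_sum_range, mul_comm]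
  simpa using geom_sum_mul_neg u p

lemma hasDerivAt_weierstrassFactor (p : ℕ) (u : ℂ) :
    HasDerivAt (weierstrassFactor p)
      (-u ^ p * Complex.exp (∑ r ∈ Icc 1 p, (r : ℂ)⁻¹ * u ^ r)) u := by
  have hS : HasDerivAt (fun u => ∑ r ∈ Icc 1 p, (r : ℂ)⁻¹ * u ^ r)
      (∑ r ∈ Icc 1 p, u ^ (r - 1)) u := by
    refine HasDerivAt.fun_sum fun r hr => ?_
    have hr0 : (r : ℂ) ≠ 0 := Nat.cast_ne_zero.mpr (by grind)
    simpa [← mul_assoc, inv_mul_cancel₀ hr0] using (hasDerivAt_pow r u).const_mul (r : ℂ)⁻¹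
  refine (((hasDerivAt_id' u).const_sub 1).fun_mul hS.cexp).congr_deriv ?_
  linear_combination (Complex.exp (∑ r ∈ Icc 1 p, (r : ℂ)⁻¹ * u ^ r)) *
    one_sub_mul_sum_Icc_pow_sub_one p u

@[fun_prop]
lemma differentiable_weierstrassFactor (p : ℕ) : Differentiable ℂ (weierstrassFactor p) :=
  fun u => (hasDerivAt_weierstrassFactor p u).differentiableAt

lemma logDeriv_weierstrassFactor {p : ℕ} {u : ℂ} (hu : u ≠ 1) :
    logDeriv (weierstrassFactor p) u = u ^ p / (u - 1) := by
  have hu' : 1 - u ≠ 0 := sub_ne_zero.mpr (Ne.symm hu)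
  rw [logDeriv_apply, (hasDerivAt_weierstrassFactor p u).deriv, weierstrassFactor]
  field_simp
  ring

lemma logDeriv_weierstrassFactor_div {p : ℕ} {γ w : ℂ} (hγ : γ ≠ 0) (hw : w ≠ γ) :
    logDeriv (fun z => weierstrassFactor p (z / γ)) w = (w / γ) ^ p / (w - γ) := by
  have hwγ : w / γ ≠ 1 := fun h => hw ((div_eq_one_iff_eq hγ).mp h)
  have hw' : w - γ ≠ 0 := sub_ne_zero.mpr hw
  rw [← Function.comp_def, logDeriv_comp (differentiable_weierstrassFactor p _) (by fun_prop),
    logDeriv_weierstrassFactor hwγ, deriv_div_const, deriv_id'']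
  field_simp

lemma pow_div_sub_eq_inv_sub_add_sum {w γ : ℂ} (hγ : γ ≠ 0) (hw : w ≠ γ) (p : ℕ) :
    (w / γ) ^ p / (w - γ) = (w - γ)⁻¹ + ∑ r ∈ Icc 1 p, w ^ (r - 1) * γ⁻¹ ^ r := by
  have hwγ : w - γ ≠ 0 := sub_ne_zero.mpr hw
  induction p with
  | zero => simp [div_eq_mul_inv]
  | succ p ih =>
    rw [Finset.sum_Icc_succ_top (by omega), ← add_assoc, ← ih, Nat.add_sub_cancel]
    field_simp
    linear_combination (w ^ p * γ⁻¹ ^ p) * mul_inv_cancel₀ hγ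

lemma norm_pow_div_sub_le {w γ : ℂ} (p : ℕ) (h : 2 * ‖w‖ < ‖γ‖) :
    ‖(w / γ) ^ p / (w - γ)‖ ≤ 2 * ‖w‖ ^ p * (1 / ‖γ‖) ^ (p + 1) := by
  have hγ : 0 < ‖γ‖ := lt_of_le_of_lt (by positivity) h
  have hwγ : ‖γ‖ / 2 ≤ ‖w - γ‖ := by
    have := norm_sub_norm_le γ w
    rw [norm_sub_rev] at this
    linarith
  calc ‖(w / γ) ^ p / (w - γ)‖ = ‖w‖ ^ p / ‖γ‖ ^ p / ‖w - γ‖ := by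
        rw [norm_div, norm_pow, norm_div, div_pow]
    _ ≤ ‖w‖ ^ p / ‖γ‖ ^ p / (‖γ‖ / 2) := by gcongr
    _ = 2 * ‖w‖ ^ p * (1 / ‖γ‖) ^ (p + 1) := by
        rw [div_pow, one_pow, pow_succ]
        field_simp

lemma summable_pow_div_sub {p : ℕ} {γ : ℕ → ℂ} (hγ : ∀ n, γ n ≠ 0)
    (hgenus : Summable (fun n => (1 / ‖γ n‖) ^ (p + 1))) (w : ℂ) :
    Summable (fun n => (w / γ n) ^ p / (w - γ n)) := by
  refine Summable.of_norm_bounded_eventually (hgenus.mul_left (2 * ‖w‖ ^ p)) ?_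
  have hsmall := hgenus.tendsto_cofinite_zero.eventually_lt_const
    (show (0 : ℝ) < (1 / (2 * ‖w‖ + 1)) ^ (p + 1) by positivity)
  filter_upwards [hsmall] with n hn
  refine norm_pow_div_sub_le p ?_
  have hn' := lt_of_pow_lt_pow_left₀ (p + 1) (by positivity) hn
  rw [one_div_lt_one_div (norm_pos_iff.mpr (hγ n)) (by positivity)] at hn'
  linarith

lemma eq_zero_of_tendsto_prod_range {M : Type*} [CommMonoidWithZero M] [TopologicalSpace M]
    [T2Space M] {F : ℕ → M} {y : M} {m : ℕ} (hF : F m = 0)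
    (h : Tendsto (fun N => ∏ n ∈ range N, F n) atTop (nhds y)) : y = 0 := by
  refine tendsto_nhds_unique (h.congr' ?_) tendsto_const_nhds
  filter_upwards [eventually_gt_atTop m] with N hN
  exact prod_eq_zero (mem_range.mpr hN) hF

lemma hasSum_logDeriv_of_tendstoLocallyUniformlyOn_prod {p : ℕ} {γ : ℕ → ℂ}
    {g : ℂ → ℂ} {U : Set ℂ} {w : ℂ} (hγ : ∀ n, γ n ≠ 0)
    (hgenus : Summable (fun n => (1 / ‖γ n‖) ^ (p + 1))) (hU : IsOpen U) (hwU : w ∈ U)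
    (hg : TendstoLocallyUniformlyOn
      (fun N z => ∏ n ∈ range N, weierstrassFactor p (z / γ n)) g atTop U)
    (hwγ : ∀ n, w ≠ γ n) (hgw : g w ≠ 0) :
    HasSum (fun n => (w / γ n) ^ p / (w - γ n)) (logDeriv g w) := by
  rw [(summable_pow_div_sub hγ hgenus w).hasSum_iff_tendsto_nat]
  have hlim := Complex.logDeriv_tendsto hU hwU hg
    (Eventually.of_forall fun N => (by fun_prop : Differentiable ℂ _).differentiableOn) hgw
  refine hlim.congr fun N => ?_
  rw [logDeriv_prod]
  · exact sum_congr rfl fun n _ => logDeriv_weierstrassFactor_div (hγ n) (hwγ n)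
  · exact fun n _ => weierstrassFactor_eq_zero_iff.not.mpr
      fun h => hwγ n ((div_eq_one_iff_eq (hγ n)).mp h)
  · fun_prop

lemma tendsto_sum_inv_sub_of_hasSum {p : ℕ} {γ : ℕ → ℂ} {w L : ℂ} (hγ : ∀ n, γ n ≠ 0)
    (hwγ : ∀ n, w ≠ γ n) (hL : HasSum (fun n => (w / γ n) ^ p / (w - γ n)) L)
    (π : Equiv.Perm ℕ)
    (hπ : ∀ r ∈ Icc 1 p, Tendsto (fun N => ∑ n ∈ range N, (γ (π n))⁻¹ ^ r) atTop (nhds 0)) :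
    Tendsto (fun N => ∑ n ∈ range N, (w - γ (π n))⁻¹) atTop (nhds L) := by
  have hperm := ((π.hasSum_iff).mpr hL).tendsto_sum_nat
  have hpow : Tendsto (fun N => ∑ r ∈ Icc 1 p, w ^ (r - 1) * ∑ n ∈ range N, (γ (π n))⁻¹ ^ r)
      atTop (nhds 0) := by
    simpa using tendsto_finsetSum _ fun r hr => (hπ r hr).const_mul (w ^ (r - 1))
  rw [← sub_zero L]
  refine (hperm.sub hpow).congr fun N => ?_
  simp only [Function.comp_apply, pow_div_sub_eq_inv_sub_add_sum (hγ _) (hwγ _), sum_add_distrib,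
    mul_sum]
  rw [sum_comm]
  ring

open Complex in
lemma re_mul_inv_eq_inner_div_normSq (c u : ℂ) : (c * u⁻¹).re = inner ℝ u c / normSq u := by
  rw [Complex.inner, inv_def, ← mul_assoc, re_mul_ofReal, div_eq_mul_inv]

lemma exists_re_mul_inv_sub_pos {Z : Set ℂ} {w : ℂ} (hw : w ∉ closure (convexHull ℝ Z)) :
    ∃ c : ℂ, ∀ z ∈ Z, 0 < (c * (w - z)⁻¹).re := by
  obtain ⟨φ, s, hφZ, hφw⟩ :=
    geometric_hahn_banach_closed_point (convex_convexHull ℝ Z).closure isClosed_closure hw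
  refine ⟨(InnerProductSpace.toDual ℝ ℂ).symm φ, fun z hz => ?_⟩
  have hzZ := subset_closure (subset_convexHull ℝ Z hz)
  have hwz : w - z ≠ 0 := sub_ne_zero.mpr fun h => hw (h ▸ hzZ)
  rw [re_mul_inv_eq_inner_div_normSq, real_inner_comm, InnerProductSpace.toDual_symm_apply,
    map_sub]
  exact div_pos (by linarith [hφZ z hzZ]) (Complex.normSq_pos.mpr hwz)

lemma not_tendsto_add_sum_zero_of_re_pos {a : ℕ → ℂ} {b : ℂ} (hb : 0 ≤ b.re)
    (ha : ∀ n, 0 < (a n).re) : ¬ Tendsto (fun N => b + ∑ n ∈ range N, a n) atTop (nhds 0) := by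
  intro h
  have hre := (Complex.continuous_re.tendsto 0).comp h
  have : (a 0).re ≤ (0 : ℂ).re := by
    refine ge_of_tendsto hre ?_
    filter_upwards [eventually_gt_atTop 0] with N hN
    simp only [Function.comp_apply, Complex.add_re, Complex.re_sum]
    have := single_le_sum (fun n _ => (ha n).le) (mem_range.mpr hN)
    linarith
  linarith [ha 0, Complex.zero_re]

lemma not_tendsto_natCast_div_add_sum_inv_sub {Z : Set ℂ} {a : ℕ → ℂ} {c w : ℂ} {q : ℕ}
    (hc : ∀ z ∈ Z, 0 < (c * (w - z)⁻¹).re) (h0 : q ≠ 0 → 0 ∈ Z) (ha : ∀ n, a n ∈ Z) :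
    ¬ Tendsto (fun N => q / w + ∑ n ∈ range N, (w - a n)⁻¹) atTop (nhds 0) := by
  intro h
  refine not_tendsto_add_sum_zero_of_re_pos (b := c * (q / w)) ?_ (fun n => hc _ (ha n)) ?_
  · rcases eq_or_ne q 0 with rfl | hq
    · simp
    have hw := hc 0 (h0 hq)
    rw [sub_zero] at hw
    rw [div_eq_mul_inv, mul_left_comm, ← Complex.ofReal_natCast, Complex.re_ofReal_mul]
    positivity
  · simpa only [mul_add, mul_sum, mul_zero] using h.const_mul c

theorem gauss_lucas_rearrangeable (p q : ℕ) (γ : ℕ → ℂ)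
    (hγ : ∀ n, γ n ≠ 0)
    (hgenus : Summable (fun n => (1 / ‖γ n‖) ^ (p + 1)))
    (g : ℂ → ℂ)
    (hg : TendstoLocallyUniformly
      (fun N z => ∏ n ∈ range N,
        (1 - z / γ n) * Complex.exp (∑ r ∈ Icc 1 p, (r : ℂ)⁻¹ * (z / γ n) ^ r))
      g atTop)
    (hrearr : ∃ π : Equiv.Perm ℕ, ∀ r ∈ Icc 1 p,
      Tendsto (fun N => ∑ n ∈ range N, (γ (π n))⁻¹ ^ r) atTop (nhds 0))
    (f : ℂ → ℂ) (hf : ∀ z, f z = z ^ q * g z)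
    (w : ℂ) (hw : deriv f w = 0) :
    w ∈ closure (convexHull ℝ {z : ℂ | f z = 0}) := by
  by_contra hw_out
  have hg' : TendstoLocallyUniformlyOn
      (fun N z => ∏ n ∈ range N, weierstrassFactor p (z / γ n)) g atTop Set.univ :=
    tendstoLocallyUniformlyOn_univ.mpr hg
  have hw_ne : ∀ {z}, f z = 0 → w ≠ z := fun hz h =>
    hw_out (subset_closure (subset_convexHull ℝ _ (h ▸ hz)))
  have hγ_zero : ∀ m, f (γ m) = 0 := fun m => by
    rw [hf, eq_zero_of_tendsto_prod_range (weierstrassFactor_eq_zero_iff.mpr (div_self (hγ m)))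
      (hg'.tendsto_at (Set.mem_univ _)), mul_zero]
  have hwγ : ∀ n, w ≠ γ n := fun n => hw_ne (hγ_zero n)
  have hfw : w ^ q * g w ≠ 0 := hf w ▸ fun h => hw_ne h rfl
  have hg_diff : DifferentiableAt ℂ g w := (hg'.differentiableOn
      (Eventually.of_forall fun N => (by fun_prop : Differentiable ℂ _).differentiableOn)
      isOpen_univ).differentiableAt univ_mem
  have hlog : q / w + logDeriv g w = 0 := by
    rw [← logDeriv_pow w q, ← logDeriv_mul (f := (· ^ q)) w (left_ne_zero_of_mul hfw)
      (right_ne_zero_of_mul hfw) (by fun_prop) hg_diff, logDeriv_apply, ← funext hf, hw, zero_div]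
  obtain ⟨π, hπ⟩ := hrearr
  have hsum := tendsto_sum_inv_sub_of_hasSum hγ hwγ
    (hasSum_logDeriv_of_tendstoLocallyUniformlyOn_prod hγ hgenus isOpen_univ (Set.mem_univ w) hg'
      hwγ (right_ne_zero_of_mul hfw)) π hπ
  obtain ⟨c, hc⟩ := exists_re_mul_inv_sub_pos hw_out
  exact not_tendsto_natCast_div_add_sum_inv_sub hc
    (fun hq => show f 0 = 0 by rw [hf, zero_pow hq, zero_mul]) (fun n => hγ_zero (π n))
    (hlog ▸ hsum.const_add _)
end

section
/- Every entire function of genus zero of the form f(z) = z^q ∏_{n=1}^∞ (1 − z/γ_n) with ∑ |γ_n|^{-1} < ∞ satisfies the Gauss-Lucas relation: every zero of f' lies in the closure of the convex hull of the zeros of f. -/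
/-!
If `w` lies outside the closed convex hull of the zeros of `f`, separating it from the hull gives a
real-linear functional `ψ` with `ψ ((w - a)⁻¹) > 0` for every zero `a`: compose the separating form
with conjugation, since `conj z⁻¹ = z / |z|²`. The product converges locally uniformly, so its
logarithmic derivative is the sum of those of its factors, `f' w / f w = q / w + ∑ (w - γₙ)⁻¹`.
Applying `ψ` makes the right-hand side positive, so `f' w ≠ 0`.
-/

open Filter
open scoped ComplexConjugate

lemma exists_forall_pos_inv_sub_of_notMem_closure_convexHull {S : Set ℂ} {w : ℂ}
    (hw : w ∉ closure (convexHull ℝ S)) : ∃ ψ : ℂ →L[ℝ] ℝ, ∀ a ∈ S, 0 < ψ (w - a)⁻¹ := by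
  obtain ⟨ℓ, c, hℓS, hcw⟩ :=
    geometric_hahn_banach_closed_point (convex_convexHull ℝ S).closure isClosed_closure hw
  refine ⟨ℓ.comp Complex.conjCLE.toContinuousLinearMap, fun a ha => ?_⟩
  have hpos : 0 < ℓ (w - a) := by
    rw [map_sub]
    linarith [hℓS a (subset_closure (subset_convexHull ℝ S ha))]
  have hconj : conj (w - a)⁻¹ = (Complex.normSq (w - a))⁻¹ • (w - a) := by
    rw [Complex.inv_def, map_mul, Complex.conj_conj, Complex.conj_ofReal, Complex.real_smul,
      mul_comm]
  have hne : w - a ≠ 0 := by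
    rintro h
    simp [h] at hpos
  change 0 < ℓ (conj (w - a)⁻¹)
  rw [hconj, map_smul, smul_eq_mul]
  exact mul_pos (inv_pos.2 (Complex.normSq_pos.2 hne)) hpos

lemma logDeriv_one_sub_div {c : ℂ} (hc : c ≠ 0) (w : ℂ) :
    logDeriv (fun z => 1 - z / c) w = (w - c)⁻¹ := by
  have hderiv : HasDerivAt (fun z => 1 - z / c) (-c⁻¹) w := by
    simpa using ((hasDerivAt_id w).div_const c).const_sub 1
  rw [logDeriv_apply, hderiv.deriv]
  by_cases hwc : w = c
  · simp [hwc, hc]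
  · have : w - c ≠ 0 := sub_ne_zero.2 hwc
    field_simp
    ring

section GenusZeroProduct

variable {ι : Type*} {γ : ι → ℂ}

lemma tprod_one_sub_div_self (hγ : ∀ i, γ i ≠ 0) (j : ι) : ∏' i, (1 - γ j / γ i) = 0 :=
  tprod_of_exists_eq_zero ⟨j, by simp [hγ j]⟩

lemma summable_inv_sub_of_summable_one_div_norm (hγ : ∀ i, γ i ≠ 0)
    (hsum : Summable fun i => 1 / ‖γ i‖) (w : ℂ) : Summable fun i => (w - γ i)⁻¹ := by
  have hnorm : Tendsto (fun i => ‖γ i‖) cofinite atTop := by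
    have h := hsum.tendsto_cofinite_zero
    simp only [one_div] at h
    simpa only [Pi.inv_def, inv_inv] using (tendsto_nhdsWithin_iff.2
      ⟨h, .of_forall fun i => inv_pos.2 (norm_pos_iff.2 (hγ i))⟩).inv_tendsto_nhdsGT_zero
  refine (hsum.mul_left 2).of_norm_bounded_eventually ?_
  filter_upwards [hnorm.eventually_ge_atTop (2 * ‖w‖)] with i hi
  have hγi : 0 < ‖γ i‖ := norm_pos_iff.2 (hγ i)
  have hdist : ‖γ i‖ / 2 ≤ ‖w - γ i‖ := by
    linarith [norm_sub_norm_le (γ i) w, norm_sub_rev (γ i) w]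
  rw [norm_inv, mul_one_div]
  calc ‖w - γ i‖⁻¹ ≤ (‖γ i‖ / 2)⁻¹ := inv_anti₀ (by positivity) hdist
    _ = 2 / ‖γ i‖ := by rw [inv_div]

lemma hasProdLocallyUniformlyOn_one_sub_div (hsum : Summable fun i => 1 / ‖γ i‖) :
    HasProdLocallyUniformlyOn (fun i z => 1 - z / γ i) (fun z => ∏' i, (1 - z / γ i))
      Set.univ := by
  refine hasProdLocallyUniformlyOn_of_forall_compact isOpen_univ fun K _ hK => ?_
  obtain ⟨R, hR⟩ := hK.isBounded.exists_norm_le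
  simp_rw [sub_eq_add_neg]
  refine Summable.hasProdUniformlyOn_one_add hK (hsum.mul_left R)
    (.of_forall fun i z hz => ?_) fun i => by fun_prop
  rw [norm_neg, norm_div, mul_one_div]
  gcongr
  exact hR z hz

lemma differentiable_tprod_one_sub_div (hsum : Summable fun i => 1 / ‖γ i‖) :
    Differentiable ℂ fun z => ∏' i, (1 - z / γ i) := by
  rw [← differentiableOn_univ]
  exact (hasProdLocallyUniformlyOn_one_sub_div hsum).differentiableOn
    (.of_forall fun s => by fun_prop) isOpen_univ

lemma logDeriv_tprod_one_sub_div (hγ : ∀ i, γ i ≠ 0) (hsum : Summable fun i => 1 / ‖γ i‖)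
    {w : ℂ} (hw : ∏' i, (1 - w / γ i) ≠ 0) :
    logDeriv (fun z => ∏' i, (1 - z / γ i)) w = ∑' i, (w - γ i)⁻¹ := by
  have hfactor : ∀ i, 1 - w / γ i ≠ 0 := by
    intro i h
    rw [div_eq_one_iff_eq (hγ i) |>.1 (sub_eq_zero.1 h).symm] at hw
    exact hw (tprod_one_sub_div_self hγ i)
  simp_rw [← logDeriv_one_sub_div (hγ _) w]
  refine logDeriv_tprod_eq_tsum isOpen_univ (Set.mem_univ w) hfactor (fun i => by fun_prop) ?_
    ⟨_, hasProdLocallyUniformlyOn_one_sub_div hsum⟩ hw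
  simpa only [logDeriv_one_sub_div (hγ _)] using
    summable_inv_sub_of_summable_one_div_norm hγ hsum w

lemma logDeriv_pow_mul_tprod_one_sub_div (hγ : ∀ i, γ i ≠ 0)
    (hsum : Summable fun i => 1 / ‖γ i‖) (q : ℕ) {w : ℂ}
    (hw : w ^ q * ∏' i, (1 - w / γ i) ≠ 0) :
    logDeriv (fun z => z ^ q * ∏' i, (1 - z / γ i)) w = q / w + ∑' i, (w - γ i)⁻¹ := by
  rw [logDeriv_mul (f := (· ^ q)) w (left_ne_zero_of_mul hw) (right_ne_zero_of_mul hw)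
    (by fun_prop) (differentiable_tprod_one_sub_div hsum w), logDeriv_pow,
    logDeriv_tprod_one_sub_div hγ hsum (right_ne_zero_of_mul hw)]

end GenusZeroProduct

theorem gauss_lucas_genus_zero (q : ℕ) (γ : ℕ → ℂ)
    (hγ : ∀ n, γ n ≠ 0)
    (hgenus : Summable (fun n => 1 / ‖γ n‖))
    (f : ℂ → ℂ) (hf : ∀ z, f z = z ^ q * ∏' n, (1 - z / γ n))
    (w : ℂ) (hw : deriv f w = 0) :
    w ∈ closure (convexHull ℝ {z : ℂ | f z = 0}) := by
  by_contra hwS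
  obtain ⟨ψ, hψ⟩ := exists_forall_pos_inv_sub_of_notMem_closure_convexHull hwS
  have hfw : f w ≠ 0 := fun h => hwS (subset_closure (subset_convexHull ℝ _ h))
  have hγ_zero (n : ℕ) : f (γ n) = 0 := by rw [hf, tprod_one_sub_div_self hγ n, mul_zero]
  have hlog : q / w + ∑' n, (w - γ n)⁻¹ = 0 := by
    rw [← logDeriv_pow_mul_tprod_one_sub_div hγ hgenus q (hf w ▸ hfw), ← funext hf,
      logDeriv_apply, hw, zero_div]
  have hpow : 0 ≤ ψ (q / w) := by
    rcases eq_or_ne q 0 with rfl | hq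
    · simp
    · have hzero : f 0 = 0 := by simp [hf, hq]
      rw [div_eq_mul_inv, ← Complex.ofReal_natCast, ← Complex.real_smul, map_smul, smul_eq_mul]
      exact mul_nonneg q.cast_nonneg (by simpa using (hψ 0 hzero).le)
  have hsummable := summable_inv_sub_of_summable_one_div_norm hγ hgenus w
  have htsum : 0 < ψ (∑' n, (w - γ n)⁻¹) := by
    rw [ψ.map_tsum hsummable]
    exact (hsummable.mapL ψ).tsum_pos (fun n => (hψ _ (hγ_zero n)).le) 0 (hψ _ (hγ_zero 0))
  have hψlog := congrArg ψ hlog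
  rw [map_add, map_zero] at hψlog
  linarith
end

section
/- If K is a closed separately convex subset of ℂ^M containing the zero set of an analytic function f : ℂ^M → ℂ, and for each m and each z ∈ ℂ^M the univariate function g(w) = f(update z m w) satisfies the univariate Gauss-Lucas relation, then K contains every zero of every non-identically-zero partial derivative ∂f/∂z_m. -/
theorem closed_sepConvex_contains_critical_points {M : ℕ}
    (K : Set (Fin M → ℂ)) (hKclosed : IsClosed K) (hKconv : SeparatelyConvex K)
    (f : (Fin M → ℂ) → ℂ) (hf : ∀ z, AnalyticAt ℂ f z)
    (hzeros : f ⁻¹' {0} ⊆ K)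
    (hGL : ∀ (m : Fin M) (z : Fin M → ℂ) (w : ℂ),
      deriv (fun u => f (Function.update z m u)) w = 0 →
      w ∈ closure (convexHull ℝ {u : ℂ | f (Function.update z m u) = 0}))
    (m : Fin M)
    (hm : ∃ z, deriv (fun u => f (Function.update z m u)) (z m) ≠ 0)
    (z : Fin M → ℂ)
    (hz : deriv (fun u => f (Function.update z m u)) (z m) = 0) :
    z ∈ K := by
  have hmem := hGL m z (z m) hz
  set C : Set ℂ := {w : ℂ | Function.update z m w ∈ K} with hC
  have hCclosed : IsClosed C :=
    hKclosed.preimage (continuous_const.update m continuous_id)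
  have hsub : {u : ℂ | f (Function.update z m u) = 0} ⊆ C := fun u hu =>
    hzeros (by simpa using hu)
  have : z m ∈ C := by
    have h1 : closure (convexHull ℝ {u : ℂ | f (Function.update z m u) = 0}) ⊆ C :=
      closure_minimal (convexHull_min hsub (hKconv m z)) hCclosed
    exact h1 hmem
  rw [hC, Set.mem_setOf_eq, Function.update_eq_self] at this; exact this
end
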